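/- Let φ be a Bernstein function and H(λ) = φ(λ) - λφ'(λ). If there exists c ∈ (0,1) such that c·φ(λ) ≤ H(λ) ≤ φ(λ) for all λ > λ_U, then φ(λx) ≤ x^{1-c} φ(λ) for all λ > λ_U and x ≥ 1. -/

import Mathlib

open MeasureTheory Set Real

/-! The lower comparison `c φ ≤ H = φ - λ φ'` says `λ φ'(λ) ≤ (1 - c) φ(λ)` for `λ > λ_U`, i.e.
`λ ↦ λ^{-(1-c)} φ(λ)` has nonpositive derivative there, so it is antitone on `(λ_U, ∞)`;
comparing its values at `λ` and `λx` gives the scaling bound. The only analytic input is that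
a Bernstein function is differentiable on `(0, ∞)`, which follows by differentiating its
Lévy–Khintchine integral under the integral sign, dominated by a multiple of `min 1 t`. -/

theorem mul_rpow_le_of_mul_deriv_le {f : ℝ → ℝ} {δ r : ℝ} (hr : 0 ≤ r)
    (hf : ∀ y > r, DifferentiableAt ℝ f y) (hlog : ∀ y > r, y * deriv f y ≤ δ * f y)
    {l x : ℝ} (hl : r < l) (hx : 1 ≤ x) : f (l * x) ≤ x ^ δ * f l := by
  set G : ℝ → ℝ := fun y => f y * y ^ (-δ)
  have hG : ∀ y > r, HasDerivAt G (deriv f y * y ^ (-δ) + f y * (-δ * y ^ (-δ - 1))) y :=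
    fun y hy => (hf y hy).hasDerivAt.mul (hasDerivAt_rpow_const (Or.inl (hr.trans_lt hy).ne'))
  have hanti : AntitoneOn G (Ioi r) := by
    refine antitoneOn_of_hasDerivWithinAt_nonpos (convex_Ioi r)
      (fun y hy => (hG y hy).continuousAt.continuousWithinAt)
      (fun y hy => (hG y (interior_subset hy)).hasDerivWithinAt) fun y hy => ?_
    rw [interior_Ioi] at hy
    have hy0 : 0 < y := hr.trans_lt hy
    have hsplit : y ^ (-δ) = y ^ (-δ - 1) * y := by
      rw [← rpow_add_one hy0.ne']; ring_nf
    have hpos : 0 < y ^ (-δ - 1) := rpow_pos_of_pos hy0 _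
    rw [hsplit]
    nlinarith [mul_le_mul_of_nonneg_left (hlog y hy) hpos.le]
  have hl0 : 0 < l := hr.trans_lt hl
  have hl_le : l ≤ l * x := le_mul_of_one_le_right hl0.le hx
  have hGx : G (l * x) ≤ G l := hanti hl (hl.trans_le hl_le) hl_le
  have hinv : ∀ y : ℝ, 0 < y → y ^ (-δ) * y ^ δ = 1 := fun y hy => by
    rw [rpow_neg hy.le, inv_mul_cancel₀ (rpow_pos_of_pos hy δ).ne']
  calc f (l * x) = G (l * x) * (l * x) ^ δ := by
        simp only [G, mul_assoc, hinv _ (hl0.trans_le hl_le), mul_one]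
    _ ≤ G l * (l * x) ^ δ := by gcongr
    _ = x ^ δ * f l := by
        rw [mul_rpow hl0.le (zero_le_one.trans hx)]
        simp only [G]
        linear_combination (f l * x ^ δ) * hinv l hl0

theorem abs_one_sub_exp_neg_mul_le {l t : ℝ} (hl : 0 ≤ l) (ht : 0 ≤ t) :
    |1 - exp (-(l * t))| ≤ (1 + l) * min 1 t := by
  have hexp_le : exp (-(l * t)) ≤ 1 := exp_le_one_iff.mpr (by nlinarith)
  have hlin : 1 - exp (-(l * t)) ≤ l * t := by linarith [add_one_le_exp (-(l * t))]
  rw [abs_of_nonneg (by linarith)]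
  rcases le_total t 1 with h | h
  · rw [min_eq_right h]; nlinarith
  · rw [min_eq_left h]; nlinarith [exp_pos (-(l * t))]

theorem mul_exp_neg_mul_le {s t : ℝ} (hs : 0 < s) (ht : 0 ≤ t) :
    t * exp (-(s * t)) ≤ (1 + s⁻¹) * min 1 t := by
  have hexp_le : exp (-(s * t)) ≤ 1 := exp_le_one_iff.mpr (by nlinarith)
  have hdecay : s * t * exp (-(s * t)) ≤ 1 :=
    (mul_exp_neg_le_exp_neg_one (s * t)).trans (exp_le_one_iff.mpr (by norm_num))
  have hle_inv : t * exp (-(s * t)) ≤ s⁻¹ := by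
    calc t * exp (-(s * t)) = s⁻¹ * (s * t * exp (-(s * t))) := by field_simp
      _ ≤ s⁻¹ * 1 := by gcongr
      _ = s⁻¹ := mul_one _
  rcases le_total t 1 with h | h
  · rw [min_eq_right h]; nlinarith [inv_pos.mpr hs]
  · rw [min_eq_left h]; linarith

section BernsteinIntegral

variable {μ : Measure ℝ}

theorem integrable_min_one_of_lintegral_lt_top
    (hμ : ∫⁻ t in Ioi (0:ℝ), ENNReal.ofReal (min 1 t) ∂μ < ⊤) :
    Integrable (fun t : ℝ => min 1 t) (μ.restrict (Ioi 0)) := by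
  refine ⟨(continuous_const.min continuous_id).aestronglyMeasurable,
    (hasFiniteIntegral_iff_ofReal ?_).2 hμ⟩
  filter_upwards [ae_restrict_mem measurableSet_Ioi] with t ht
  exact le_min zero_le_one (le_of_lt ht)

theorem integrable_of_norm_le_mul_min_one
    (hint : Integrable (fun t : ℝ => min 1 t) (μ.restrict (Ioi 0)))
    {f : ℝ → ℝ} {K : ℝ} (hf : Continuous f) (hbound : ∀ t > 0, ‖f t‖ ≤ K * min 1 t) :
    Integrable f (μ.restrict (Ioi 0)) := by
  refine (hint.const_mul K).mono hf.aestronglyMeasurable ?_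
  filter_upwards [ae_restrict_mem measurableSet_Ioi] with t ht
  exact (hbound t ht).trans (le_abs_self _)

theorem hasDerivAt_integral_one_sub_exp_neg_mul
    (hint : Integrable (fun t : ℝ => min 1 t) (μ.restrict (Ioi 0))) {y : ℝ} (hy : 0 < y) :
    HasDerivAt (fun l => ∫ t in Ioi (0:ℝ), (1 - exp (-(l * t))) ∂μ)
      (∫ t in Ioi (0:ℝ), t * exp (-(y * t)) ∂μ) y := by
  have hcont : ∀ s : ℝ, Continuous fun t : ℝ => 1 - exp (-(s * t)) := fun s => by fun_prop
  have hcont' : ∀ s : ℝ, Continuous fun t : ℝ => t * exp (-(s * t)) := fun s => by fun_prop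
  have hy2 : 0 < y / 2 := half_pos hy
  refine (hasDerivAt_integral_of_dominated_loc_of_deriv_le
    (F' := fun s t => t * exp (-(s * t))) (Metric.ball_mem_nhds y hy2)
    (Filter.Eventually.of_forall fun s => (hcont s).aestronglyMeasurable)
    (integrable_of_norm_le_mul_min_one hint (hcont y)
      fun t ht => abs_one_sub_exp_neg_mul_le hy.le ht.le)
    (hcont' y).aestronglyMeasurable ?_
    (integrable_of_norm_le_mul_min_one hint (hcont' (y / 2))
      fun t ht => (abs_of_nonneg (by positivity)).trans_le (mul_exp_neg_mul_le hy2 ht.le))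
    (ae_of_all _ fun t s _ => ?_)).2
  · filter_upwards [ae_restrict_mem measurableSet_Ioi] with t ht s hs
    have hs2 : y / 2 ≤ s := by
      have := (abs_lt.1 (Real.dist_eq s y ▸ Metric.mem_ball.1 hs)).1
      linarith
    have ht0 : (0:ℝ) < t := ht
    rw [Real.norm_eq_abs, abs_of_nonneg (by positivity)]
    exact mul_le_mul_of_nonneg_left (exp_le_exp.2 (by nlinarith)) ht0.le
  · have hlin : HasDerivAt (fun s => -(s * t)) (-t) s := (hasDerivAt_mul_const t).neg
    convert hlin.exp.const_sub 1 using 1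
    ring

end BernsteinIntegral

theorem stmt16_general (μ : Measure ℝ)
    (hμ : ∫⁻ t in Ioi (0:ℝ), ENNReal.ofReal (min 1 t) ∂μ < ⊤)
    (a b : ℝ)
    (φ H : ℝ → ℝ)
    (hφ : ∀ l > 0, φ l = a + b * l + ∫ t in Ioi (0:ℝ), (1 - exp (-(l * t))) ∂μ)
    (hH : ∀ l > 0, H l = φ l - l * deriv φ l)
    (c lU : ℝ) (hlU : 0 ≤ lU)
    (hcomp : ∀ l > lU, c * φ l ≤ H l ∧ H l ≤ φ l) :
    ∀ l > lU, ∀ x ≥ 1, φ (l * x) ≤ x ^ (1 - c) * φ l := by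
  have hint := integrable_min_one_of_lintegral_lt_top hμ
  have hdiff : ∀ y > lU, DifferentiableAt ℝ φ y := by
    intro y hy
    have hy0 : 0 < y := hlU.trans_lt hy
    have hφ_near : φ =ᶠ[nhds y] fun l => a + b * l + ∫ t in Ioi (0:ℝ), (1 - exp (-(l * t))) ∂μ :=
      (eventually_gt_nhds hy0).mono hφ
    refine DifferentiableAt.congr_of_eventuallyEq ?_ hφ_near
    exact ((differentiableAt_id.const_mul b).const_add a).add
      (hasDerivAt_integral_one_sub_exp_neg_mul hint hy0).differentiableAt
  have hlog : ∀ y > lU, y * deriv φ y ≤ (1 - c) * φ y := by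
    intro y hy
    have hlower := (hcomp y hy).1
    rw [hH y (hlU.trans_lt hy)] at hlower
    linarith
  intro l hl x hx
  exact mul_rpow_le_of_mul_deriv_le hlU hdiff hlog hl hx

theorem stmt16 (μ : Measure ℝ)
    (hμ : ∫⁻ t in Ioi (0:ℝ), ENNReal.ofReal (min 1 t) ∂μ < ⊤)
    (a b : ℝ) (ha : 0 ≤ a) (hb : 0 ≤ b)
    (φ H : ℝ → ℝ)
    (hφ : ∀ l > 0, φ l = a + b * l + ∫ t in Ioi (0:ℝ), (1 - exp (-(l * t))) ∂μ)
    (hH : ∀ l > 0, H l = φ l - l * deriv φ l)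
    (c lU : ℝ) (hc : c ∈ Ioo (0:ℝ) 1) (hlU : 0 ≤ lU)
    (hcomp : ∀ l > lU, c * φ l ≤ H l ∧ H l ≤ φ l) :
    ∀ l > lU, ∀ x ≥ 1, φ (l * x) ≤ x ^ (1 - c) * φ l :=
  stmt16_general μ hμ a b φ H hφ hH c lU hlU hcomp
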